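/- arXiv:2107.00929 — 2 statements merged into one kernel-verified Lean document; each statement's English description precedes it below -/
import Mathlib

section
/- For every flagging monitor D, every co-safety LTL formula φ, every infinite trace σ, and all indices i ≤ j: if σ_{i,j} ⊨ D;φ, then for every k > j, σ_{i,k} ⊭ D;φ. -/
/-! ## Flagging monitors -/

/-- A flagging monitor over an event alphabet `E`: a finite set of states with
an initial state, flagging states (not containing the initial state nor the sink),
a sink state, a set of typed variables represented by a type of valuations `Val`
with an initial valuation, and a deterministic guarded transition function whose
sources are non-sink states. -/
structure FlaggingMonitor (E : Type) where
  State : Type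
  Val : Type
  finState : Finite State
  init : State
  v0 : Val
  Flag : Set State
  sink : State
  init_notin_flag : init ∉ Flag
  sink_notin_flag : sink ∉ Flag
  trans : Set (State × (E → Val → Prop) × (E → Val → Val) × State)
  src_ne_sink : ∀ t ∈ trans, t.1 ≠ sink
  det : ∀ t ∈ trans, ∀ t' ∈ trans, t.1 = t'.1 →
          ∀ e v, t.2.1 e v → t'.2.1 e v → t = t'

namespace FlaggingMonitor

variable {E : Type}

/-- One step of the operational semantics of a flagging monitor, on
configurations (state, valuation), labelled by events:
(1) a guarded transition from a non-flagging non-sink state whose guard holds;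
(2) stuttering in a non-flagging non-sink state when no guard holds;
(3) the sink configuration cannot be left;
(4) a flagging configuration always moves to the sink. -/
inductive Step (M : FlaggingMonitor E) :
    M.State × M.Val → E → M.State × M.Val → Prop
  | trans {q : M.State} {g : E → M.Val → Prop} {a : E → M.Val → M.Val}
      {q' : M.State} {e : E} {v : M.Val} :
      q ∉ M.Flag → q ≠ M.sink → (q, g, a, q') ∈ M.trans → g e v →
      Step M (q, v) e (q', a e v)
  | stutter {q : M.State} {e : E} {v : M.Val} :
      q ∉ M.Flag → q ≠ M.sink →
      (∀ g a q', (q, g, a, q') ∈ M.trans → ¬ g e v) →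
      Step M (q, v) e (q, v)
  | sink {e : E} {v : M.Val} : Step M (M.sink, v) e (M.sink, v)
  | flag {q : M.State} {e : E} {v : M.Val} :
      q ∈ M.Flag → Step M (q, v) e (M.sink, v)

/-- Extension of the step relation along a finite sequence of events. -/
def Steps (M : FlaggingMonitor E) :
    M.State × M.Val → List E → M.State × M.Val → Prop
  | c, [], c' => c' = c
  | c, e :: es, c' => ∃ c'', Step M c e c'' ∧ Steps M c'' es c'

end FlaggingMonitor

/-- The segment `σ_{i,j}` of an infinite trace, as the list of events at
positions `i, i+1, …, j`. -/
def seg {E : Type} (σ : ℕ → E) (i j : ℕ) : List E :=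
  (List.range (j + 1 - i)).map fun k => σ (i + k)

/-- `σ_{i,j} ⊩ D`: the segment `σ_{i,j}` flags the monitor `D`, i.e. running `D`
from its initial configuration along `σ_{i,j}` reaches a flagging state. -/
def Flags {E : Type} (D : FlaggingMonitor E) (σ : ℕ → E) (i j : ℕ) : Prop :=
  ∃ q v, q ∈ D.Flag ∧ D.Steps (D.init, D.v0) (seg σ i j) (q, v)

/-- The monitor `D_⟨*⟩` that flags on every event: states `q0 = 0`, `q_F = 1`,
`⊥ = 2`, with a single transition from `q0` to `q_F` with guard true and null
action. -/
def starMonitor (E : Type) : FlaggingMonitor E where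
  State := Fin 3
  Val := Unit
  finState := inferInstance
  init := 0
  v0 := ()
  Flag := {1}
  sink := 2
  init_notin_flag := by simp
  sink_notin_flag := by simp
  trans := {(0, fun _ _ => True, fun _ v => v, 1)}
  src_ne_sink := by
    rintro t ht
    simp only [Set.mem_singleton_iff] at ht
    subst ht
    simp
  det := by
    rintro t ht t' ht' _ _ _ _ _
    simp only [Set.mem_singleton_iff] at ht ht'
    rw [ht, ht']

/-! ## LTL -/

/-- LTL formulas over propositions `P`, with negation applied only to
propositions. -/
inductive LTL (P : Type) : Type
  | tt : LTL P
  | ff : LTL P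
  | atom : P → LTL P
  | natom : P → LTL P
  | and : LTL P → LTL P → LTL P
  | or : LTL P → LTL P → LTL P
  | next : LTL P → LTL P
  | untl : LTL P → LTL P → LTL P
  | glob : LTL P → LTL P

/-- Satisfaction `σ_{i,j} ⊨ φ` of an LTL formula on the segment of the infinite
trace `σ` from position `i` to position `j` (where `j : ℕ∞` may be `∞`). -/
def Sat {P : Type} (σ : ℕ → Set P) : LTL P → ℕ → ℕ∞ → Prop
  | .tt, _, _ => True
  | .ff, _, _ => False
  | .atom e, i, _ => e ∈ σ i
  | .natom e, i, _ => e ∉ σ i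
  | .and φ ψ, i, j => Sat σ φ i j ∧ Sat σ ψ i j
  | .or φ ψ, i, j => Sat σ φ i j ∨ Sat σ ψ i j
  | .next φ, i, j => (i : ℕ∞) < j ∧ Sat σ φ (i + 1) j
  | .untl φ ψ, i, j => ∃ l : ℕ, (l : ℕ∞) ≤ j ∧ Sat σ ψ l ⊤ ∧
      ∀ k, i ≤ k → k < l → Sat σ φ k j
  | .glob φ, i, j => j = ⊤ ∧ ∀ k, i ≤ k → Sat σ φ k j

/-- Co-safety LTL formulas: those built without `G`. -/
inductive CoSafe {P : Type} : LTL P → Prop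
  | tt : CoSafe .tt
  | ff : CoSafe .ff
  | atom (e : P) : CoSafe (.atom e)
  | natom (e : P) : CoSafe (.natom e)
  | and {φ ψ : LTL P} : CoSafe φ → CoSafe ψ → CoSafe (.and φ ψ)
  | or {φ ψ : LTL P} : CoSafe φ → CoSafe ψ → CoSafe (.or φ ψ)
  | next {φ : LTL P} : CoSafe φ → CoSafe (.next φ)
  | untl {φ ψ : LTL P} : CoSafe φ → CoSafe ψ → CoSafe (.untl φ ψ)

/-- Tight satisfaction `σ_{i,j} ⊩ φ` of a (co-safety) LTL formula on a finite
segment: the segment satisfies `φ` and no strict prefix of it does. -/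
def TightSat {P : Type} (σ : ℕ → Set P) (φ : LTL P) (i j : ℕ) : Prop :=
  Sat σ φ i j ∧ ∀ k, i ≤ k → k < j → ¬ Sat σ φ i k

/-! ## Monitor-triggered temporal logic -/

/-- The suffix of a trace starting at position `n`, viewed as a trace starting
at position `0`. -/
def shiftTrace {E : Type} (σ : ℕ → E) (n : ℕ) : ℕ → E := fun k => σ (k + n)

/-- `σ_{i,∞} ⊨ D:φ`: simple-trigger satisfaction. -/
def TrigSat {P : Type} (D : FlaggingMonitor (Set P)) (φ : LTL P)
    (σ : ℕ → Set P) (i : ℕ) : Prop :=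
  ∃ j, i ≤ j ∧ (Flags D σ i j → Sat σ φ j ⊤)

/-- `σ_{i,k} ⊨ D;φ`: one step of a repeating trigger, for co-safety `φ`. -/
def SeqSat {P : Type} (D : FlaggingMonitor (Set P)) (φ : LTL P)
    (σ : ℕ → Set P) (i k : ℕ) : Prop :=
  ∃ j, i ≤ j ∧ j ≤ k ∧ Flags D σ i j ∧ TightSat σ φ j k

/-- `σ ⊨ (D;φ)*`: repeating-trigger satisfaction, as a greatest fixpoint: there
is a set of traces containing `σ`, each member `τ` of which satisfies: for all
`i`, if `τ_{0,i} ⊩ D` then there is `j ≥ i` with `τ_{0,j} ⊨ D;φ` and the suffix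
`τ_{j+1,∞}` again a member of the set. -/
def RepSat {P : Type} (D : FlaggingMonitor (Set P)) (φ : LTL P)
    (σ : ℕ → Set P) : Prop :=
  ∃ R : (ℕ → Set P) → Prop, R σ ∧
    ∀ τ, R τ → ∀ i, Flags D τ 0 i →
      ∃ j, i ≤ j ∧ SeqSat D φ τ 0 j ∧ R (shiftTrace τ (j + 1))

/-! ## Mealy machines and realisability -/

/-- A Mealy machine with input alphabet `I` and output alphabet `O`: states with
an initial state, a complete deterministic transition function, and accepting
states. -/
structure Mealy (I O : Type) where
  S : Type
  s0 : S
  trans : S → I → O × S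
  acc : Set S

/-- The state of a Mealy machine after reading the first `n` inputs of `inp`. -/
def Mealy.run {I O : Type} (C : Mealy I O) (inp : ℕ → I) : ℕ → C.S
  | 0 => C.s0
  | n + 1 => (C.trans (Mealy.run C inp n) (inp n)).2

/-- The output of a Mealy machine at step `n` on the input stream `inp`. -/
def Mealy.out {I O : Type} (C : Mealy I O) (inp : ℕ → I) (n : ℕ) : O :=
  (C.trans (C.run inp n) (inp n)).1

/-- The word over `2^(P_in ∪ P_out)` produced by the run of `C` on the input
stream `inp`: at each step the union of the input and the output events. -/
def mword {Pin Pout : Type} (C : Mealy (Set Pin) (Set Pout))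
    (inp : ℕ → Set Pin) : ℕ → Set (Pin ⊕ Pout) :=
  fun n => Sum.inl '' inp n ∪ Sum.inr '' C.out inp n

/-- `C` produces the word `w`. -/
def Produced {Pin Pout : Type} (C : Mealy (Set Pin) (Set Pout))
    (w : ℕ → Set (Pin ⊕ Pout)) : Prop :=
  ∃ inp : ℕ → Set Pin, w = mword C inp

/-- `C` realises `γ → φ`: every word produced by `C` that satisfies `γ` also
satisfies `φ`. -/
def RealisesImp {Pin Pout : Type} (C : Mealy (Set Pin) (Set Pout))
    (γ φ : LTL (Pin ⊕ Pout)) : Prop :=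
  ∀ w, Produced C w → Sat w γ 0 ⊤ → Sat w φ 0 ⊤

/-- `C` tightly realises `γ → φ` (for co-safety `φ`): it realises `γ → φ` and,
for every produced word satisfying `γ`, some prefix of the word is accepted by
`C`, tightly satisfies `φ`, and no strict prefix of it is accepted. -/
def TightlyRealises {Pin Pout : Type} (C : Mealy (Set Pin) (Set Pout))
    (γ φ : LTL (Pin ⊕ Pout)) : Prop :=
  RealisesImp C γ φ ∧
  ∀ inp : ℕ → Set Pin, Sat (mword C inp) γ 0 ⊤ →
    ∃ n, C.run inp (n + 1) ∈ C.acc ∧ TightSat (mword C inp) φ 0 n ∧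
      ∀ m, m ≤ n → C.run inp m ∉ C.acc

/-! ## Assumption formulas -/

/-- Boolean combinations of propositions (in negation normal form). -/
inductive IsAlpha {P : Type} : LTL P → Prop
  | tt : IsAlpha .tt
  | ff : IsAlpha .ff
  | atom (e : P) : IsAlpha (.atom e)
  | natom (e : P) : IsAlpha (.natom e)
  | and {φ ψ : LTL P} : IsAlpha φ → IsAlpha ψ → IsAlpha (.and φ ψ)
  | or {φ ψ : LTL P} : IsAlpha φ → IsAlpha ψ → IsAlpha (.or φ ψ)

/-- Formulas built from Boolean formulas and un-nested `X` by `∧` and `∨`. -/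
inductive IsBeta {P : Type} : LTL P → Prop
  | base {φ : LTL P} : IsAlpha φ → IsBeta φ
  | next {φ : LTL P} : IsAlpha φ → IsBeta (.next φ)
  | and {φ ψ : LTL P} : IsBeta φ → IsBeta ψ → IsBeta (.and φ ψ)
  | or {φ ψ : LTL P} : IsBeta φ → IsBeta ψ → IsBeta (.or φ ψ)

/-- Assumption formulas: conjunctions of invariants `G β` and recurrence
formulas `G F α` (where `F α = tt U α`). -/
inductive IsAssumption {P : Type} : LTL P → Prop
  | inv {β : LTL P} : IsBeta β → IsAssumption (.glob β)
  | recur {α : LTL P} : IsAlpha α → IsAssumption (.glob (.untl .tt α))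
  | and {γ γ' : LTL P} : IsAssumption γ → IsAssumption γ' →
      IsAssumption (.and γ γ')

/-! ## Triggers over combined input/output propositions -/

/-- The projection of a trace over `P_in ∪ P_out` onto `P_in`. -/
def projIn {Pin Pout : Type} (w : ℕ → Set (Pin ⊕ Pout)) : ℕ → Set Pin :=
  fun n => {x | Sum.inl x ∈ w n}

/-- `w_{i,∞} ⊨ M:φ`, where the monitor reads the projection of `w` onto the
input propositions. -/
def TrigSatP {Pin Pout : Type} (M : FlaggingMonitor (Set Pin))
    (φ : LTL (Pin ⊕ Pout)) (w : ℕ → Set (Pin ⊕ Pout)) (i : ℕ) : Prop :=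
  ∃ j, i ≤ j ∧ (Flags M (projIn w) i j → Sat w φ j ⊤)

/-- `w_{i,k} ⊨ M;φ`, where the monitor reads the projection of `w` onto the
input propositions. -/
def SeqSatP {Pin Pout : Type} (M : FlaggingMonitor (Set Pin))
    (φ : LTL (Pin ⊕ Pout)) (w : ℕ → Set (Pin ⊕ Pout)) (i k : ℕ) : Prop :=
  ∃ j, i ≤ j ∧ j ≤ k ∧ Flags M (projIn w) i j ∧ TightSat w φ j k

/-- `w ⊨ (M;φ)*`, where the monitor reads the projection of `w` onto the input
propositions (greatest fixpoint, as in `RepSat`). -/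
def RepSatP {Pin Pout : Type} (M : FlaggingMonitor (Set Pin))
    (φ : LTL (Pin ⊕ Pout)) (w : ℕ → Set (Pin ⊕ Pout)) : Prop :=
  ∃ R : (ℕ → Set (Pin ⊕ Pout)) → Prop, R w ∧
    ∀ τ, R τ → ∀ i, Flags M (projIn τ) 0 i →
      ∃ j, i ≤ j ∧ SeqSatP M φ τ 0 j ∧ R (shiftTrace τ (j + 1))


namespace FlaggingMonitor

variable {E : Type} {M : FlaggingMonitor E}

lemma step_det {c c1 c2 : M.State × M.Val} {e : E}
    (h1 : Step M c e c1) (h2 : Step M c e c2) : c1 = c2 := by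
  cases h1 with
  | @trans q g a q' e v hf hs ht hg =>
    cases h2 with
    | @trans _ g' a' q'' _ _ hf' hs' ht' hg' =>
      have heq := M.det _ ht _ ht' rfl e v hg hg'
      simp only [Prod.mk.injEq] at heq
      obtain ⟨-, -, haa, hqq⟩ := heq
      rw [← haa, ← hqq]
    | stutter hf' hs' hn => exact absurd hg (hn _ _ _ ht)
    | sink => exact absurd rfl hs
    | flag hq => exact absurd hq hf
  | stutter hf hs hn =>
    cases h2 with
    | @trans _ g' a' q'' _ _ hf' hs' ht' hg' => exact absurd hg' (hn _ _ _ ht')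
    | stutter => rfl
    | sink => exact absurd rfl hs
    | flag hq => exact absurd hq hf
  | sink =>
    cases h2 with
    | trans hf hs ht hg => exact absurd rfl hs
    | stutter hf hs hn => exact absurd rfl hs
    | sink => rfl
    | flag hq => exact absurd hq M.sink_notin_flag
  | flag hq =>
    cases h2 with
    | trans hf hs ht hg => exact absurd hq hf
    | stutter hf hs hn => exact absurd hq hf
    | sink => exact absurd hq M.sink_notin_flag
    | flag => rfl

lemma steps_det {c c1 c2 : M.State × M.Val} {l : List E}
    (h1 : Steps M c l c1) (h2 : Steps M c l c2) : c1 = c2 := by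
  induction l generalizing c with
  | nil => rw [h1, h2]
  | cons e es ih =>
    obtain ⟨d1, hs1, hr1⟩ := h1
    obtain ⟨d2, hs2, hr2⟩ := h2
    exact ih (step_det hs1 hs2 ▸ hr1) hr2

lemma steps_sink {v : M.Val} {l : List E} {c : M.State × M.Val}
    (h : Steps M (M.sink, v) l c) : c = (M.sink, v) := by
  induction l with
  | nil => exact h
  | cons e es ih =>
    obtain ⟨d, hs, hr⟩ := h
    have hd : d = (M.sink, v) := by
      cases hs with
      | trans hf hsk ht hg => exact absurd rfl hsk
      | stutter hf hsk hn => exact absurd rfl hsk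
      | sink => rfl
      | flag hq => exact absurd hq M.sink_notin_flag
    exact ih (hd ▸ hr)

lemma steps_append {c c' : M.State × M.Val} {l1 l2 : List E} :
    Steps M c (l1 ++ l2) c' ↔ ∃ c'', Steps M c l1 c'' ∧ Steps M c'' l2 c' := by
  induction l1 generalizing c with
  | nil =>
    simp only [List.nil_append]
    constructor
    · intro h; exact ⟨c, rfl, h⟩
    · rintro ⟨c'', h1, h2⟩; rw [show c'' = c from h1] at h2; exact h2
  | cons e es ih =>
    constructor
    · rintro ⟨d, hs, hr⟩
      obtain ⟨c'', h1, h2⟩ := ih.mp hr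
      exact ⟨c'', ⟨d, hs, h1⟩, h2⟩
    · rintro ⟨c'', ⟨d, hs, h1⟩, h2⟩
      exact ⟨d, hs, ih.mpr ⟨c'', h1, h2⟩⟩

end FlaggingMonitor

lemma seg_append {E : Type} (σ : ℕ → E) (i j k : ℕ) (h1 : i ≤ j) (h2 : j < k) :
    seg σ i k = seg σ i j ++ seg σ (j + 1) k := by
  unfold seg
  have hk : k + 1 - i = (j + 1 - i) + (k - j) := by omega
  rw [hk, List.range_add, List.map_append, List.map_map]
  congr 1
  have hkj : k + 1 - (j + 1) = k - j := by omega
  rw [hkj]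
  apply List.map_congr_left
  intro m hm
  simp only [Function.comp_apply]
  congr 1
  omega

lemma flags_unique {P : Type} (D : FlaggingMonitor (Set P)) (σ : ℕ → Set P)
    {i j1 j2 : ℕ} (hi1 : i ≤ j1) (hi2 : i ≤ j2)
    (h1 : Flags D σ i j1) (h2 : Flags D σ i j2) : j1 = j2 := by
  by_contra hne
  -- wlog-style: prove the symmetric core
  have key : ∀ a b : ℕ, i ≤ a → a < b →
      Flags D σ i a → Flags D σ i b → False := by
    intro a b hia hab ⟨q1, v1, hq1, hs1⟩ ⟨q2, v2, hq2, hs2⟩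
    rw [seg_append σ i a b hia hab] at hs2
    obtain ⟨c'', hca, hcb⟩ := FlaggingMonitor.steps_append.mp hs2
    have hc : c'' = (q1, v1) := FlaggingMonitor.steps_det hca hs1
    subst hc
    have hlen : seg σ (a + 1) b ≠ [] := by
      unfold seg
      simp only [ne_eq, List.map_eq_nil_iff, List.range_eq_nil]
      omega
    obtain ⟨e, es, hseg⟩ := List.exists_cons_of_ne_nil hlen
    rw [hseg] at hcb
    obtain ⟨d, hsd, hrd⟩ := hcb
    have hd : d = (D.sink, v1) := by
      cases hsd with
      | trans hf _ _ _ => exact absurd hq1 hf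
      | stutter hf _ _ => exact absurd hq1 hf
      | sink => exact absurd hq1 D.sink_notin_flag
      | flag => rfl
    subst hd
    have hq2s : q2 = D.sink := congrArg Prod.fst (FlaggingMonitor.steps_sink hrd)
    exact D.sink_notin_flag (hq2s ▸ hq2)
  rcases Nat.lt_or_ge j1 j2 with h | h
  · exact key j1 j2 hi1 h h1 h2
  · exact key j2 j1 hi2 (by omega) h2 h1

/-- If `σ_{i,j} ⊨ D;φ` then no extension `σ_{i,k}` (`k > j`)
satisfies `D;φ`. -/
theorem seqSat_no_extension (P : Type) [Fintype P]
    (D : FlaggingMonitor (Set P)) (φ : LTL P) (hφ : CoSafe φ)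
    (σ : ℕ → Set P) (i j : ℕ) (hij : i ≤ j) (h : SeqSat D φ σ i j) :
    ∀ k, j < k → ¬ SeqSat D φ σ i k := by
  obtain ⟨m, him, hmj, hfm, hts⟩ := h
  intro k hk hk'
  obtain ⟨m', him', hm'k, hfm', hts'⟩ := hk'
  have hmm : m = m' := flags_unique D σ him him' hfm hfm'
  subst hmm
  exact hts'.2 j hmj (lt_of_le_of_lt (le_refl j) hk) hts.1
end

section
/- For every co-safety LTL formula φ over a finite set of propositions P, there exists a deterministic finite automaton over the alphabet 2^P that accepts exactly the nonempty finite words u = u_0 u_1 ... u_n such that the finite trace segment u_{0,n} satisfies φ. -/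
/-- A nonempty finite word `u = u_0 … u_n` over `2^P`, viewed as the finite
trace segment `u_{0,n}` (of the trace obtained by extending `u` with `∅`). -/
def wordTrace {P : Type} (u : List (Set P)) : ℕ → Set P :=
  fun k => u.getD k ∅

/-!
A position `i` of a word `u` is encoded by marking the letters at positions `≥ i`, and a predicate
`R u i` is pointed-regular when a DFA decides it on these marked words. Pointed-regular predicates
are closed under `∧`, `∨`, moving the point one step right, and the until-quantifier
`∃ l ≤ |u|, R₂ u l ∧ ∀ k ∈ [i, l), R₁ u k`. For the last, the automaton runs the automata of `R₁`
and `R₂` from all positions at once: for each candidate witness `l` it keeps the set of states of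
the `R₁`-runs started in `[i, l)` and the state of the `R₂`-run started at `l`, a finite amount of
data since all these runs read the same letters. By induction on a co-safety formula, satisfaction
on `wordTrace u` at `i`, with bound `∞` and with bound `|u| - 1`, is pointed-regular; with bound `∞`
the until-witness can be taken `≤ |u|`, as `wordTrace u` is constantly `∅` from `|u|` on. Marking
the whole word (the point `0`) yields the automaton.
-/

section PointedRegular

variable {α σ σ₁ σ₂ : Type}

def markFrom (u : List α) (i : ℕ) : List (α × Bool) :=
  u.mapIdx fun k a => (a, decide (i ≤ k))

lemma markFrom_append_singleton (u : List α) (a : α) (i : ℕ) :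
    markFrom (u ++ [a]) i = markFrom u i ++ [(a, decide (i ≤ u.length))] :=
  List.mapIdx_concat

lemma markFrom_eq_map {u : List α} {i : ℕ} {b : Bool}
    (h : ∀ k < u.length, decide (i ≤ k) = b) : markFrom u i = u.map (·, b) := by
  refine List.ext_getElem? fun k => ?_
  rcases lt_or_ge k u.length with hk | hk
  · simp [markFrom, List.getElem?_mapIdx, List.getElem?_eq_getElem hk, h k hk]
  · simp [markFrom, List.getElem?_mapIdx, List.getElem?_eq_none hk]

lemma markFrom_zero (u : List α) : markFrom u 0 = u.map (·, true) :=
  markFrom_eq_map fun _ _ => by simp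

lemma markFrom_of_length_le {u : List α} {i : ℕ} (hi : u.length ≤ i) :
    markFrom u i = u.map (·, false) :=
  markFrom_eq_map fun _ hk => by simp; omega

def IsPointedRegular (R : List α → ℕ → Prop) : Prop :=
  ∃ L : Language (α × Bool), L.IsRegular ∧ ∀ u i, markFrom u i ∈ L ↔ R u i

lemma isPointedRegular_of_dfa {σ : Type} [Finite σ] (M : DFA (α × Bool) σ) {R : List α → ℕ → Prop}
    (hM : ∀ u i, M.eval (markFrom u i) ∈ M.accept ↔ R u i) : IsPointedRegular R :=
  ⟨M.accepts, ⟨σ, Fintype.ofFinite σ, M, rfl⟩, hM⟩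

namespace IsPointedRegular

variable {R R₁ R₂ : List α → ℕ → Prop}

lemma congr (h : IsPointedRegular R) {R' : List α → ℕ → Prop} (hR : ∀ u i, R u i ↔ R' u i) :
    IsPointedRegular R' := by
  obtain ⟨L, hL, hLR⟩ := h
  exact ⟨L, hL, fun u i => (hLR u i).trans (hR u i)⟩

lemma and (h₁ : IsPointedRegular R₁) (h₂ : IsPointedRegular R₂) :
    IsPointedRegular fun u i => R₁ u i ∧ R₂ u i := by
  obtain ⟨L₁, hL₁, hR₁⟩ := h₁
  obtain ⟨L₂, hL₂, hR₂⟩ := h₂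
  exact ⟨L₁ ⊓ L₂, hL₁.inf hL₂, fun u i => Language.mem_inf.trans (and_congr (hR₁ u i) (hR₂ u i))⟩

lemma or (h₁ : IsPointedRegular R₁) (h₂ : IsPointedRegular R₂) :
    IsPointedRegular fun u i => R₁ u i ∨ R₂ u i := by
  obtain ⟨L₁, hL₁, hR₁⟩ := h₁
  obtain ⟨L₂, hL₂, hR₂⟩ := h₂
  exact ⟨L₁ + L₂, hL₁.add hL₂,
    fun u i => (Language.mem_add _ _ _).trans (or_congr (hR₁ u i) (hR₂ u i))⟩

lemma isRegular_zero (h : IsPointedRegular R) : Language.IsRegular ({u | R u 0} : Language α) := by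
  obtain ⟨L, ⟨σ, _, M, rfl⟩, hR⟩ := h
  refine ⟨σ, inferInstance, M.comap (·, true), ?_⟩
  ext u
  rw [DFA.accepts_comap]
  change u.map (·, true) ∈ M.accepts ↔ R u 0
  rw [← markFrom_zero, hR]

end IsPointedRegular

lemma isPointedRegular_const (p : Prop) : IsPointedRegular fun (_ : List α) _ => p :=
  isPointedRegular_of_dfa (σ := Unit) ⟨fun _ _ => (), (), {_u | p}⟩ fun _ _ => Iff.rfl

def nonemptyDFA : DFA (α × Bool) Bool := ⟨fun _ _ => true, false, {true}⟩

lemma nonemptyDFA_eval (w : List (α × Bool)) : nonemptyDFA.eval w = decide (w ≠ []) := by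
  induction w using List.reverseRecOn with
  | nil => rfl
  | append_singleton w x _ => simp [DFA.eval_append_singleton, nonemptyDFA]

lemma isPointedRegular_ne_nil : IsPointedRegular fun (u : List α) _ => u ≠ [] :=
  isPointedRegular_of_dfa nonemptyDFA fun u i => by
    rw [nonemptyDFA_eval]
    simp [nonemptyDFA, markFrom]

def markedLetterDFA (p : Option α → Prop) : DFA (α × Bool) (Option Prop) where
  step q x := q.or (if x.2 then some (p (some x.1)) else none)
  start := none
  accept := {q | q.elim (p none) id}

lemma markedLetterDFA_eval (p : Option α → Prop) (u : List α) (i : ℕ) :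
    (markedLetterDFA p).eval (markFrom u i) = u[i]?.map (p ∘ some) := by
  induction u using List.reverseRecOn with
  | nil => rfl
  | append_singleton u a ih =>
    rw [markFrom_append_singleton, DFA.eval_append_singleton, ih]
    rcases lt_trichotomy i u.length with hi | rfl | hi
    · simp [markedLetterDFA, List.getElem?_append_left hi, List.getElem?_eq_getElem hi]
    · simp [markedLetterDFA]
    · simp [markedLetterDFA, List.getElem?_eq_none hi.le, hi.not_ge]

lemma isPointedRegular_getElem? (p : Option α → Prop) :
    IsPointedRegular fun (u : List α) i => p u[i]? :=
  isPointedRegular_of_dfa (markedLetterDFA p) fun u i => by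
    rw [markedLetterDFA_eval]
    cases u[i]? <;> rfl

lemma isPointedRegular_lt_length : IsPointedRegular fun (u : List α) i => i < u.length :=
  (isPointedRegular_getElem? fun o => o.isSome).congr fun u i => by simp


lemma eval_markFrom_append_singleton_of_le (M : DFA (α × Bool) σ) {u : List α} {i : ℕ}
    (a : α) (hi : i ≤ u.length) :
    M.eval (markFrom (u ++ [a]) i) = M.step (M.eval (markFrom u i)) (a, true) := by
  rw [markFrom_append_singleton, DFA.eval_append_singleton, decide_eq_true hi]

def shiftDFA (M : DFA (α × Bool) σ) : DFA (α × Bool) (σ × Bool) where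
  step s x := (M.step s.1 (x.1, x.2 && s.2), s.2 || x.2)
  start := (M.start, false)
  accept := {s | s.1 ∈ M.accept}

lemma shiftDFA_eval (M : DFA (α × Bool) σ) (u : List α) (i : ℕ) :
    (shiftDFA M).eval (markFrom u i) = (M.eval (markFrom u (i + 1)), decide (i < u.length)) := by
  induction u using List.reverseRecOn with
  | nil => rfl
  | append_singleton u a ih =>
    rw [markFrom_append_singleton, markFrom_append_singleton, DFA.eval_append_singleton,
      DFA.eval_append_singleton, ih]
    simp only [shiftDFA, List.length_append, List.length_singleton, Prod.mk.injEq]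
    refine ⟨congrArg _ (congrArg _ ?_), ?_⟩ <;> grind

lemma IsPointedRegular.succ {R : List α → ℕ → Prop} (h : IsPointedRegular R) :
    IsPointedRegular fun u i => R u (i + 1) := by
  obtain ⟨_, ⟨σ, _, M, rfl⟩, hR⟩ := h
  refine isPointedRegular_of_dfa (shiftDFA M) fun u i => ?_
  rw [shiftDFA_eval]
  exact hR u (i + 1)

def runsFrom (M : DFA (α × Bool) σ) (u : List α) (i l : ℕ) : Set σ :=
  (fun k => M.eval (markFrom u k)) '' Set.Ico i l

lemma runsFrom_append_singleton (M : DFA (α × Bool) σ) {u : List α} (a : α) (i : ℕ) {l : ℕ}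
    (hl : l ≤ u.length + 1) :
    runsFrom M (u ++ [a]) i l = (M.step · (a, true)) '' runsFrom M u i l := by
  rw [runsFrom, runsFrom, Set.image_image]
  exact Set.image_congr fun k hk => eval_markFrom_append_singleton_of_le M a (by grind)

lemma runsFrom_length_succ (M : DFA (α × Bool) σ) (u : List α) (i : ℕ) :
    runsFrom M u i (u.length + 1) =
      if i ≤ u.length then insert (M.eval (u.map (·, false))) (runsFrom M u i u.length)
      else runsFrom M u i u.length := by
  split_ifs with hi
  · rw [runsFrom, ← Set.insert_Ico_right_eq_Ico_add_one hi, Set.image_insert_eq,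
      markFrom_of_length_le le_rfl, runsFrom]
  · rw [runsFrom, runsFrom, Set.Ico_eq_empty (by omega), Set.Ico_eq_empty (by omega)]

def untilDFA (M₁ : DFA (α × Bool) σ₁) (M₂ : DFA (α × Bool) σ₂) :
    DFA (α × Bool) (σ₁ × σ₂ × Set σ₁ × Set (Set σ₁ × σ₂)) where
  step s x :=
    let f := (M₁.step · (x.1, true))
    let A := f '' (if x.2 then insert s.1 s.2.2.1 else s.2.2.1)
    (M₁.step s.1 (x.1, false), M₂.step s.2.1 (x.1, false), A,
      insert (A, M₂.step s.2.1 (x.1, false))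
        (Prod.map (f '' ·) (M₂.step · (x.1, true)) '' s.2.2.2))
  start := (M₁.start, M₂.start, ∅, {(∅, M₂.start)})
  accept := {s | ∃ p ∈ s.2.2.2, p.1 ⊆ M₁.accept ∧ p.2 ∈ M₂.accept}

lemma untilDFA_eval (M₁ : DFA (α × Bool) σ₁) (M₂ : DFA (α × Bool) σ₂) (u : List α) (i : ℕ) :
    (untilDFA M₁ M₂).eval (markFrom u i) =
      (M₁.eval (u.map (·, false)), M₂.eval (u.map (·, false)), runsFrom M₁ u i u.length,
        (fun l => (runsFrom M₁ u i l, M₂.eval (markFrom u l))) '' Set.Iic u.length) := by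
  induction u using List.reverseRecOn with
  | nil =>
    have h0 : Set.Iic 0 = {0} := by ext; simp
    simp [untilDFA, runsFrom, markFrom, h0]
  | append_singleton u a ih =>
    have hmap : (u ++ [a]).map (·, false) = u.map (·, false) ++ [(a, false)] := by simp
    have hIic : Set.Iic (u.length + 1) = insert (u.length + 1) (Set.Iic u.length) := by
      ext; simp; omega
    have hruns : runsFrom M₁ (u ++ [a]) i (u.length + 1) = (M₁.step · (a, true)) ''
        (if i ≤ u.length then insert (M₁.eval (u.map (·, false))) (runsFrom M₁ u i u.length)
          else runsFrom M₁ u i u.length) := by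
      rw [runsFrom_append_singleton M₁ a i le_rfl, runsFrom_length_succ]
    rw [markFrom_append_singleton, DFA.eval_append_singleton, ih, List.length_append,
      List.length_singleton, hIic, Set.image_insert_eq, hruns,
      markFrom_of_length_le (by simp : (u ++ [a]).length ≤ u.length + 1), hmap,
      DFA.eval_append_singleton, DFA.eval_append_singleton]
    simp only [untilDFA, decide_eq_true_eq]
    congr 4
    rw [Set.image_image]
    refine Set.image_congr fun l hl => ?_
    rw [runsFrom_append_singleton M₁ a i (Nat.le_succ_of_le hl),
      eval_markFrom_append_singleton_of_le M₂ a hl]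
    rfl

lemma IsPointedRegular.until {R₁ R₂ : List α → ℕ → Prop} (h₁ : IsPointedRegular R₁)
    (h₂ : IsPointedRegular R₂) :
    IsPointedRegular fun u i => ∃ l ≤ u.length, R₂ u l ∧ ∀ k, i ≤ k → k < l → R₁ u k := by
  obtain ⟨_, ⟨σ₁, _, M₁, rfl⟩, hR₁⟩ := h₁
  obtain ⟨_, ⟨σ₂, _, M₂, rfl⟩, hR₂⟩ := h₂
  refine isPointedRegular_of_dfa (untilDFA M₁ M₂) fun u i => ?_
  change (∃ p ∈ ((untilDFA M₁ M₂).eval (markFrom u i)).2.2.2,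
    p.1 ⊆ M₁.accept ∧ p.2 ∈ M₂.accept) ↔ _
  rw [untilDFA_eval, Set.exists_mem_image]
  refine exists_congr fun l => ?_
  simp only [Set.mem_Iic, runsFrom, Set.subset_def, Set.forall_mem_image, Set.mem_Ico, and_imp,
    ← hR₁, ← hR₂, DFA.mem_accepts]
  tauto

end PointedRegular

section CoSafety

variable {P : Type}

theorem Sat.top_of_const_from {σ : ℕ → Set P} {m : ℕ} (hσ : ∀ k, m ≤ k → σ k = σ m)
    (χ : LTL P) {l l' : ℕ} (hl : m ≤ l) (hl' : m ≤ l') (h : Sat σ χ l ⊤) : Sat σ χ l' ⊤ := by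
  induction χ generalizing l l' with
  | tt | ff => exact h
  | atom e | natom e =>
    simp only [Sat] at h ⊢
    rwa [hσ l' hl', ← hσ l hl]
  | and _ _ ihφ ihψ => exact ⟨ihφ hl hl' h.1, ihψ hl hl' h.2⟩
  | or _ _ ihφ ihψ => exact h.imp (ihφ hl hl') (ihψ hl hl')
  | next _ ih => exact ⟨WithTop.coe_lt_top _, ih (by omega) (by omega) h.2⟩
  | untl _ _ _ ihψ =>
    obtain ⟨l₀, -, hψ, -⟩ := h
    by_cases hl₀ : l₀ ≤ l'
    · exact ⟨l₀, le_top, hψ, fun k hk hkl => absurd (hk.trans_lt hkl) hl₀.not_gt⟩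
    · exact ⟨l', le_top, ihψ (by omega) hl' hψ, fun k hk hkl => absurd hkl hk.not_gt⟩
  | glob _ ih =>
    refine ⟨rfl, fun k hk => ?_⟩
    exact ih (le_max_of_le_left hl) (hl'.trans hk) (h.2 (max l k) (le_max_left l k))

lemma wordTrace_of_length_le {u : List (Set P)} {k : ℕ} (hk : u.length ≤ k) :
    wordTrace u k = ∅ :=
  List.getD_eq_default u ∅ hk

lemma sat_untl_top_iff (u : List (Set P)) (φ ψ : LTL P) (i : ℕ) :
    Sat (wordTrace u) (.untl φ ψ) i ⊤ ↔
      ∃ l ≤ u.length, Sat (wordTrace u) ψ l ⊤ ∧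
        ∀ k, i ≤ k → k < l → Sat (wordTrace u) φ k ⊤ := by
  have hconst : ∀ k, u.length ≤ k → wordTrace u k = wordTrace u u.length := fun k hk => by
    rw [wordTrace_of_length_le hk, wordTrace_of_length_le le_rfl]
  constructor
  · rintro ⟨l, -, hψ, hφ⟩
    by_cases hl : l ≤ u.length
    · exact ⟨l, hl, hψ, hφ⟩
    · exact ⟨u.length, le_rfl, Sat.top_of_const_from hconst ψ (by omega) le_rfl hψ,
        fun k hik hk => hφ k hik (by omega)⟩
  · rintro ⟨l, -, hψ, hφ⟩
    exact ⟨l, le_top, hψ, hφ⟩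

lemma isPointedRegular_sat_top {φ : LTL P} (hφ : CoSafe φ) :
    IsPointedRegular fun u i => Sat (wordTrace u) φ i ⊤ := by
  induction hφ with
  | tt => exact isPointedRegular_const True
  | ff => exact isPointedRegular_const False
  | atom e =>
    exact (isPointedRegular_getElem? fun o => e ∈ o.getD ∅).congr fun u i => by
      rw [← List.getD_eq_getElem?_getD]; rfl
  | natom e =>
    exact (isPointedRegular_getElem? fun o => e ∉ o.getD ∅).congr fun u i => by
      rw [← List.getD_eq_getElem?_getD]; rfl
  | and _ _ ihφ ihψ => exact ihφ.and ihψ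
  | or _ _ ihφ ihψ => exact ihφ.or ihψ
  | next _ ih => exact ih.succ.congr fun u i => (and_iff_right (WithTop.coe_lt_top _)).symm
  | untl _ _ ihφ ihψ => exact (ihφ.until ihψ).congr fun u i => (sat_untl_top_iff u _ _ i).symm

-- The conjunct `u ≠ []` avoids the truncation `[].length - 1 = 0`, under which
-- `l ≤ u.length - 1` is not `l < u.length`.
lemma isPointedRegular_sat_length_sub_one {φ : LTL P} (hφ : CoSafe φ) :
    IsPointedRegular fun u i => u ≠ [] ∧ Sat (wordTrace u) φ i ((u.length - 1 : ℕ) : ℕ∞) := by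
  induction hφ with
  | tt => exact isPointedRegular_ne_nil.congr fun u i => by simp [Sat]
  | ff => exact (isPointedRegular_const False).congr fun u i => by simp [Sat]
  | atom e =>
    exact isPointedRegular_ne_nil.and (isPointedRegular_sat_top (.atom e))
  | natom e =>
    exact isPointedRegular_ne_nil.and (isPointedRegular_sat_top (.natom e))
  | and _ _ ihφ ihψ => exact (ihφ.and ihψ).congr fun u i => and_and_left.symm
  | or _ _ ihφ ihψ => exact (ihφ.or ihψ).congr fun u i => and_or_left.symm
  | next _ ih =>
    refine (isPointedRegular_lt_length.succ.and ih.succ).congr fun u i => ?_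
    simp only [Sat, Nat.cast_lt]
    rw [Nat.lt_sub_iff_add_lt, and_left_comm]
  | untl _ hψ ihφ _ =>
    refine (ihφ.until (isPointedRegular_lt_length.and (isPointedRegular_sat_top hψ))).congr
      fun u i => ?_
    constructor
    · rintro ⟨l, -, ⟨hl, hψ⟩, hφ⟩
      exact ⟨List.ne_nil_of_length_pos (by omega), l, by exact_mod_cast Nat.le_sub_one_of_lt hl,
        hψ, fun k hik hkl => (hφ k hik hkl).2⟩
    · rintro ⟨hu, l, hl, hψ, hφ⟩
      have hl : l < u.length := by
        have := List.length_pos_of_ne_nil hu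
        norm_cast at hl
        omega
      exact ⟨l, hl.le, ⟨hl, hψ⟩, fun k hik hkl => ⟨hu, hφ k hik hkl⟩⟩

end CoSafety

theorem cosafety_dfa_exists_general (P : Type) (φ : LTL P)
    (hφ : CoSafe φ) :
    ∃ (Q : Type) (_ : Fintype Q) (q0 : Q) (δ : Q → Set P → Q) (Acc : Set Q),
      ∀ u : List (Set P),
        u.foldl δ q0 ∈ Acc ↔
          (u ≠ [] ∧ Sat (wordTrace u) φ 0 ((u.length - 1 : ℕ) : ℕ∞)) := by
  obtain ⟨Q, _, M, hM⟩ := (isPointedRegular_sat_length_sub_one hφ).isRegular_zero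
  exact ⟨Q, inferInstance, M.start, M.step, M.accept, fun u => Set.ext_iff.mp hM u⟩

/-- For every co-safety LTL formula `φ` there is a deterministic
finite automaton over `2^P` accepting exactly the nonempty finite words
`u = u_0 … u_n` whose segment `u_{0,n}` satisfies `φ`. -/
theorem cosafety_dfa_exists (P : Type) [Fintype P] (φ : LTL P)
    (hφ : CoSafe φ) :
    ∃ (Q : Type) (_ : Fintype Q) (q0 : Q) (δ : Q → Set P → Q) (Acc : Set Q),
      ∀ u : List (Set P),
        u.foldl δ q0 ∈ Acc ↔
          (u ≠ [] ∧ Sat (wordTrace u) φ 0 ((u.length - 1 : ℕ) : ℕ∞)) :=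
  cosafety_dfa_exists_general P φ hφ
end
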